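/- Let ω ∈ ℂ satisfy ω³ = 1 and ω ≠ 1. For u ∈ ℂ define the 2×2 complex matrix A(u) = (1/√6)·[[1−u, 1−ωu], [√2, √2·ω²]] and the 1×2 complex matrix B(u) = (1/√6)·[1+u, 1+ωu]. Then for every u ∈ ℂ with |u| = 1, A(u)ᴴ·A(u) + B(u)ᴴ·B(u) = I₂, where I₂ is the 2×2 identity matrix. -/

import Mathlib

open Matrix

/-- The 2×2 matrix-valued function `A` from the example. -/
noncomputable def exA (ω u : ℂ) : Matrix (Fin 2) (Fin 2) ℂ :=
  ((Real.sqrt 6 : ℂ))⁻¹ •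
    !![1 - u, 1 - ω * u; (Real.sqrt 2 : ℂ), (Real.sqrt 2 : ℂ) * ω ^ 2]

/-- The 1×2 matrix-valued function `B` from the example. -/
noncomputable def exB (ω u : ℂ) : Matrix (Fin 1) (Fin 2) ℂ :=
  ((Real.sqrt 6 : ℂ))⁻¹ • !![1 + u, 1 + ω * u]

theorem stmt9 (ω : ℂ) (hω3 : ω ^ 3 = 1) (hω1 : ω ≠ 1) :
    ∀ u : ℂ, ‖u‖ = 1 →
      (exA ω u)ᴴ * exA ω u + (exB ω u)ᴴ * exB ω u = (1 : Matrix (Fin 2) (Fin 2) ℂ) := by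
  intro u hu
  have hcu : (starRingEnd ℂ) u * u = 1 := by
    have := Complex.normSq_eq_norm_sq u
    rw [mul_comm, Complex.mul_conj, this, hu]; norm_num
  have habsω : ‖ω‖ = 1 := by
    have h : ‖ω‖ ^ 3 = 1 := by rw [← norm_pow, hω3]; simp
    nlinarith [norm_nonneg ω, sq_nonneg (‖ω‖ - 1), sq_nonneg (‖ω‖ + 1)]
  have hcω : (starRingEnd ℂ) ω = ω ^ 2 := by
    have h1 : ω * (starRingEnd ℂ) ω = 1 := by
      rw [Complex.mul_conj, Complex.normSq_eq_norm_sq, habsω]; norm_num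
    have h2 : ω * ω ^ 2 = 1 := by rw [← pow_succ']; exact hω3
    have hω0 : ω ≠ 0 := by rintro rfl; simp at habsω
    exact mul_left_cancel₀ hω0 (h1.trans h2.symm)
  have hsum : ω ^ 2 + ω + 1 = 0 := by
    have h : (ω - 1) * (ω ^ 2 + ω + 1) = 0 := by linear_combination hω3
    rcases mul_eq_zero.mp h with h | h
    · exact absurd (by linear_combination h : ω = 1) hω1
    · exact h
  have hs2 : ((Real.sqrt 2 : ℂ)) * ((Real.sqrt 2 : ℂ)) = 2 := by
    norm_cast; exact Real.mul_self_sqrt (by norm_num)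
  have hs6 : ((Real.sqrt 6 : ℂ)) * ((Real.sqrt 6 : ℂ)) = 6 := by
    norm_cast; exact Real.mul_self_sqrt (by norm_num)
  have hs6ne : ((Real.sqrt 6 : ℂ)) ≠ 0 := by
    intro h; rw [h] at hs6; norm_num at hs6
  ext i j
  fin_cases i <;> fin_cases j <;>
    simp only [exA, exB, Matrix.add_apply, Matrix.mul_apply, Matrix.conjTranspose_apply,
      Matrix.smul_apply, Fin.sum_univ_succ, Fin.sum_univ_zero, Matrix.cons_val_zero,
      Matrix.cons_val_one, Matrix.head_cons, Matrix.head_fin_const, Matrix.one_apply,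
      Matrix.cons_val', Matrix.empty_val', Matrix.cons_val_fin_one,
      smul_eq_mul, _root_.map_mul, map_inv₀, map_sub, map_add, _root_.map_one, map_pow, hcω,
      Complex.conj_ofReal, if_true, if_false] <;>
    norm_num <;>
    field_simp
  · linear_combination 2*hcu + hs2 - hs6
  · linear_combination 2*ω*hcu + ω^2*hs2 + 2*hsum
  · rw [hcω]
    linear_combination 2*ω^2*hcu + ω^4*hs2 + 2*ω*hω3 + 2*hsum
  · rw [hcω]
    linear_combination 2*ω^3*hcu + ω^6*hs2 + (2*ω^3+4)*hω3 - hs6
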